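/- Let R₂ be as defined. For every position (x,y) with y > 2x+1, there are exactly two z with 0 ≤ z < y such that (x,z) ∈ R₂, and no horizontal or diagonal option of (x,y) lies in R₂. -/

import Mathlib

/-! Every point `(a, b)` of `R2` satisfies `b ≤ 2a + 1`; for the golden pairs this is
`⌊φ²n⌋ = ⌊φn⌋ + n ≤ 2⌊φn⌋`. Hence no horizontal or diagonal option of `(x, y)` lies in `R2`, and
the condition `z < y` is void on the column `{z | (x, z) ∈ R2}`. That column is `2x + 1` together
with exactly one other point: `0` for `x = 0`, `m` for `x = 2m + 1`, and `2k + 2` for `x = 2j + 2`,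
where `k` is the unique Wythoff partner of `j` — unique because, by Rayleigh's theorem, the Beatty
sequences of `φ` and `φ²` partition the positive integers. -/

noncomputable def goldenPhi : ℝ := (1 + Real.sqrt 5) / 2

/-- The candidate set of P-positions of Blocking-2 Wythoff Nim. -/
def R2 : Set (ℕ × ℕ) :=
  {(0, 0)} ∪
  {p | ∃ n : ℕ, p = (n, 2 * n + 1) ∨ p = (2 * n + 1, n)} ∪
  {p | ∃ n : ℕ, p = (2 * ⌊goldenPhi * n⌋₊ + 2, 2 * ⌊goldenPhi ^ 2 * n⌋₊ + 2) ∨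
                p = (2 * ⌊goldenPhi ^ 2 * n⌋₊ + 2, 2 * ⌊goldenPhi * n⌋₊ + 2)}

section Beatty

variable {r s : ℝ}

lemma strictMono_natFloor_mul (hr : 1 ≤ r) : StrictMono fun n : ℕ ↦ ⌊r * n⌋₊ := by
  refine strictMono_nat_of_lt_succ fun n ↦ ?_
  have hrn : 0 ≤ r * n := by positivity
  calc ⌊r * n⌋₊ < ⌊r * n⌋₊ + 1 := Nat.lt_succ_self _
    _ = ⌊r * n + 1⌋₊ := (Nat.floor_add_one hrn).symm
    _ ≤ ⌊r * ↑(n + 1)⌋₊ := Nat.floor_mono (by push_cast; linarith)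

lemma eq_zero_of_natFloor_mul_eq_zero (hr : 1 ≤ r) {n : ℕ} (h : ⌊r * n⌋₊ = 0) : n = 0 :=
  (strictMono_natFloor_mul hr).injective (by simpa using h)

lemma natCast_natFloor_mul_eq_beattySeq (hr : 0 ≤ r) (n : ℕ) :
    (⌊r * n⌋₊ : ℤ) = beattySeq r n := by
  rw [beattySeq, Int.natCast_floor_eq_floor (by positivity), mul_comm]
  rfl

lemma exists_pos_beattySeq_eq_iff (hr : 0 ≤ r) (j : ℕ) :
    (∃ k > 0, beattySeq r k = j) ↔ ∃ n : ℕ, 0 < n ∧ ⌊r * n⌋₊ = j := by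
  constructor
  · rintro ⟨k, hk, hkj⟩
    lift k to ℕ using hk.le
    rw [← natCast_natFloor_mul_eq_beattySeq hr] at hkj
    exact ⟨k, by exact_mod_cast hk, by exact_mod_cast hkj⟩
  · rintro ⟨n, hn, hnj⟩
    exact ⟨n, by exact_mod_cast hn, by rw [← natCast_natFloor_mul_eq_beattySeq hr, hnj]⟩

theorem Irrational.xor_exists_natFloor_mul_eq (hr : Irrational r) (hrs : r.HolderConjugate s)
    {j : ℕ} (hj : 0 < j) :
    Xor (∃ n : ℕ, 0 < n ∧ ⌊r * n⌋₊ = j) (∃ n : ℕ, 0 < n ∧ ⌊s * n⌋₊ = j) := by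
  have hj' : (j : ℤ) ∈ {n : ℤ | 0 < n} := Int.natCast_pos.mpr hj
  rw [← hr.beattySeq_symmDiff_beattySeq_pos hrs, Set.mem_symmDiff] at hj'
  simpa only [xor_def, Set.mem_ofPred_eq, exists_pos_beattySeq_eq_iff hrs.nonneg,
    exists_pos_beattySeq_eq_iff hrs.symm.nonneg] using hj'

theorem Irrational.eq_zero_of_natFloor_mul_eq (hr : Irrational r) (hrs : r.HolderConjugate s)
    {m n : ℕ} (h : ⌊r * m⌋₊ = ⌊s * n⌋₊) : m = 0 ∧ n = 0 := by
  rcases m.eq_zero_or_pos with rfl | hm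
  · exact ⟨rfl, eq_zero_of_natFloor_mul_eq_zero hrs.symm.lt.le (by simpa using h.symm)⟩
  have hpos : 0 < ⌊r * m⌋₊ := (strictMono_natFloor_mul hrs.lt.le hm).trans_eq' (by simp)
  rcases n.eq_zero_or_pos with rfl | hn
  · simp [h] at hpos
  exact (((xor_iff_or_and_not_and _ _).mp (hr.xor_exists_natFloor_mul_eq hrs hpos)).2
    ⟨⟨m, hm, rfl⟩, ⟨n, hn, h.symm⟩⟩).elim

/-- For `r = φ`, `s = φ²` these are the P-positions of Wythoff Nim. -/
def IsBeattyPair (r s : ℝ) (j k : ℕ) : Prop :=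
  ∃ n : ℕ, (j = ⌊r * n⌋₊ ∧ k = ⌊s * n⌋₊) ∨ (j = ⌊s * n⌋₊ ∧ k = ⌊r * n⌋₊)

theorem Irrational.existsUnique_isBeattyPair (hr : Irrational r) (hrs : r.HolderConjugate s)
    (j : ℕ) : ∃! k, IsBeattyPair r s j k := by
  have hr₁ := strictMono_natFloor_mul hrs.lt.le
  have hs₁ := strictMono_natFloor_mul hrs.symm.lt.le
  have hexists : ∃ k, IsBeattyPair r s j k := by
    rcases j.eq_zero_or_pos with rfl | hj
    · exact ⟨0, 0, Or.inl (by simp)⟩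
    rcases (hr.xor_exists_natFloor_mul_eq hrs hj).or with ⟨n, -, rfl⟩ | ⟨n, -, rfl⟩
    · exact ⟨_, n, Or.inl ⟨rfl, rfl⟩⟩
    · exact ⟨_, n, Or.inr ⟨rfl, rfl⟩⟩
  obtain ⟨k, hk⟩ := hexists
  refine ⟨k, hk, fun k' hk' ↦ ?_⟩
  obtain ⟨n, ⟨hjn, rfl⟩ | ⟨hjn, rfl⟩⟩ := hk
  all_goals
    obtain ⟨n', ⟨hjn', rfl⟩ | ⟨hjn', rfl⟩⟩ := hk'
  · rw [hr₁.injective (hjn'.symm.trans hjn)]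
  · obtain ⟨rfl, rfl⟩ := hr.eq_zero_of_natFloor_mul_eq hrs (hjn.symm.trans hjn')
    simp
  · obtain ⟨rfl, rfl⟩ := hr.eq_zero_of_natFloor_mul_eq hrs (hjn'.symm.trans hjn)
    simp
  · rw [hs₁.injective (hjn'.symm.trans hjn)]

end Beatty

section Golden

local notation "IsWythoffPair" => IsBeattyPair goldenPhi (goldenPhi ^ 2)

lemma goldenPhi_eq_goldenRatio : goldenPhi = Real.goldenRatio := rfl

lemma goldenPhi_holderConjugate : goldenPhi.HolderConjugate (goldenPhi ^ 2) := by
  rw [Real.holderConjugate_iff, goldenPhi_eq_goldenRatio, ← inv_pow, Real.inv_goldenRatio, neg_sq,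
    Real.goldenConj_sq]
  exact ⟨Real.one_lt_goldenRatio, by ring⟩

lemma le_natFloor_goldenPhi_mul (n : ℕ) : n ≤ ⌊goldenPhi * n⌋₊ :=
  Nat.le_floor (le_mul_of_one_le_left n.cast_nonneg Real.one_lt_goldenRatio.le)

lemma natFloor_goldenPhi_sq_mul (n : ℕ) :
    ⌊goldenPhi ^ 2 * n⌋₊ = ⌊goldenPhi * n⌋₊ + n := by
  rw [goldenPhi_eq_goldenRatio, Real.goldenRatio_sq, add_one_mul,
    Nat.floor_add_natCast (by positivity)]

lemma existsUnique_isWythoffPair (j : ℕ) : ∃! k, IsWythoffPair j k :=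
  Real.goldenRatio_irrational.existsUnique_isBeattyPair goldenPhi_holderConjugate j

lemma IsBeattyPair.le_two_mul {j k : ℕ} (h : IsWythoffPair j k) :
    k ≤ 2 * j := by
  obtain ⟨n, ⟨rfl, rfl⟩ | ⟨rfl, rfl⟩⟩ := h <;>
    linarith [natFloor_goldenPhi_sq_mul n, le_natFloor_goldenPhi_mul n]

lemma mem_R2_iff {a b : ℕ} : (a, b) ∈ R2 ↔
    (a = 0 ∧ b = 0) ∨ b = 2 * a + 1 ∨ a = 2 * b + 1 ∨
      ∃ j k, IsWythoffPair j k ∧ a = 2 * j + 2 ∧ b = 2 * k + 2 := by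
  simp only [R2, Set.mem_union, Set.mem_singleton_iff, Set.mem_ofPred_eq, Prod.ext_iff,
    IsBeattyPair]
  constructor
  · rintro ((h | ⟨n, ⟨rfl, rfl⟩ | ⟨rfl, rfl⟩⟩) | ⟨n, ⟨rfl, rfl⟩ | ⟨rfl, rfl⟩⟩)
    · exact Or.inl h
    · exact Or.inr (Or.inl rfl)
    · exact Or.inr (Or.inr (Or.inl rfl))
    · exact Or.inr (Or.inr (Or.inr ⟨_, _, ⟨n, Or.inl ⟨rfl, rfl⟩⟩, rfl, rfl⟩))
    · exact Or.inr (Or.inr (Or.inr ⟨_, _, ⟨n, Or.inr ⟨rfl, rfl⟩⟩, rfl, rfl⟩))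
  · rintro (h | rfl | rfl | ⟨j, k, ⟨n, ⟨rfl, rfl⟩ | ⟨rfl, rfl⟩⟩, rfl, rfl⟩)
    · exact Or.inl (Or.inl h)
    · exact Or.inl (Or.inr ⟨a, Or.inl ⟨rfl, rfl⟩⟩)
    · exact Or.inl (Or.inr ⟨b, Or.inr ⟨rfl, rfl⟩⟩)
    · exact Or.inr ⟨n, Or.inl ⟨rfl, rfl⟩⟩
    · exact Or.inr ⟨n, Or.inr ⟨rfl, rfl⟩⟩

lemma snd_le_of_mem_R2 {a b : ℕ} (h : (a, b) ∈ R2) : b ≤ 2 * a + 1 := by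
  rcases mem_R2_iff.mp h with ⟨rfl, rfl⟩ | rfl | rfl | ⟨j, k, hjk, rfl, rfl⟩
  · exact Nat.zero_le _
  · rfl
  · omega
  · have := hjk.le_two_mul
    omega

lemma setOf_mem_R2_zero : {z | (0, z) ∈ R2} = {1, 0} := by
  ext z
  simp only [Set.mem_ofPred_eq, Set.mem_insert_iff, Set.mem_singleton_iff, mem_R2_iff]
  constructor
  · rintro (h | h | h | ⟨j, k, -, h, -⟩) <;> omega
  · rintro (rfl | rfl) <;> simp

lemma setOf_mem_R2_odd (m : ℕ) : {z | (2 * m + 1, z) ∈ R2} = {2 * (2 * m + 1) + 1, m} := by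
  ext z
  simp only [Set.mem_ofPred_eq, Set.mem_insert_iff, Set.mem_singleton_iff, mem_R2_iff]
  constructor
  · rintro (h | h | h | ⟨j, k, -, h, -⟩) <;> omega
  · rintro (rfl | rfl) <;> simp

lemma setOf_mem_R2_even {j k : ℕ} (hjk : IsWythoffPair j k) :
    {z | (2 * j + 2, z) ∈ R2} = {2 * (2 * j + 2) + 1, 2 * k + 2} := by
  ext z
  simp only [Set.mem_ofPred_eq, Set.mem_insert_iff, Set.mem_singleton_iff, mem_R2_iff]
  constructor
  · rintro (h | h | h | ⟨j', k', hjk', hj', rfl⟩)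
    · omega
    · exact Or.inl h
    · omega
    · obtain rfl : j' = j := by omega
      rw [(existsUnique_isWythoffPair _).unique hjk' hjk]
      exact Or.inr rfl
  · rintro (rfl | rfl)
    · exact Or.inr (Or.inl rfl)
    · exact Or.inr (Or.inr (Or.inr ⟨j, k, hjk, rfl, rfl⟩))

lemma ncard_setOf_mem_R2 (x : ℕ) : {z | (x, z) ∈ R2}.ncard = 2 := by
  obtain ⟨m, rfl | rfl⟩ := Nat.even_or_odd' x
  · rcases m with _ | j
    · rw [setOf_mem_R2_zero, Set.ncard_pair (by omega)]
    · obtain ⟨k, hjk, -⟩ := existsUnique_isWythoffPair j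
      rw [show 2 * (j + 1) = 2 * j + 2 by ring, setOf_mem_R2_even hjk, Set.ncard_pair (by omega)]
  · rw [setOf_mem_R2_odd, Set.ncard_pair (by omega)]

end Golden

/-- For every (x,y) with y > 2x+1: exactly two vertical options of (x,y) lie in R₂,
and no horizontal or diagonal option of (x,y) lies in R₂. -/
theorem R2_above_line :
    ∀ x y : ℕ, 2 * x + 1 < y →
      ({z : ℕ | z < y ∧ (x, z) ∈ R2}.ncard = 2) ∧
      (∀ i : ℕ, 0 < i → i ≤ x → (x - i, y) ∉ R2) ∧
      (∀ i : ℕ, 0 < i → i ≤ min x y → (x - i, y - i) ∉ R2) := by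
  intro x y hy
  refine ⟨?_, fun i _ hi h ↦ ?_, fun i _ hi h ↦ ?_⟩
  · have hcolumn : {z | z < y ∧ (x, z) ∈ R2} = {z | (x, z) ∈ R2} :=
      Set.ext fun z ↦ and_iff_right_of_imp fun h ↦ (snd_le_of_mem_R2 h).trans_lt hy
    rw [hcolumn, ncard_setOf_mem_R2]
  · have := snd_le_of_mem_R2 h
    omega
  · have := snd_le_of_mem_R2 h
    omega
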